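/- Assume Z = D − C·A^d·B = 0, A^π·B = 0, and B·C·A^π = 0. Let W = A·A^d + A^d·B·C·A^d. Then the Drazin inverse of M is M^d = [I; C·A^d]·((A·W)^d)^2·A·[I, A^d·B] (the product of the (m+n)×m block column [I; C·A^d], the m×m matrix ((A·W)^d)^2·A, and the m×(m+n) block row [I, A^d·B]). -/

import Mathlib

open Matrix Finset

/-- `X` is the Drazin inverse of `A`: `A X = X A`, `X A X = X`, and
`A^(k+1) X = A^k` for some (hence all sufficiently large) `k`. -/
def IsDrazinInverse {ι : Type*} [Fintype ι] [DecidableEq ι]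
    (A X : Matrix ι ι ℂ) : Prop :=
  A * X = X * A ∧ X * A * X = X ∧ ∃ k : ℕ, A ^ (k + 1) * X = A ^ k

/-! With `P = [A; C]` and `Q = [I, A^d B]`, the hypotheses `A^π B = 0` and `Z = 0` give
`M = P Q`, while `B C A^π = 0` gives `Q P = G A` for `G = I + A^d B C A^d`. Cline's formula
`(U V)^d = U ((V U)^d)^2 V`, applied to `M = P Q` and then to `G A`, expresses `M^d` through
`(A G)^d`. Finally `A G = A W + A A^π`, where `A A^π` is nilpotent and annihilates `A W` on
both sides, so `(A G)^d = (A W)^d`. -/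

theorem pow_succ_mul_eq_pow_of_le {M : Type*} [Monoid M] {a x : M} {k j : ℕ}
    (h : a ^ (k + 1) * x = a ^ k) (hkj : k ≤ j) : a ^ (j + 1) * x = a ^ j := by
  obtain ⟨i, rfl⟩ := Nat.exists_eq_add_of_le hkj
  rw [show k + i + 1 = i + (k + 1) by omega, pow_add, mul_assoc, h, ← pow_add, add_comm]

theorem Matrix.mul_pow_succ {ι κ R : Type*} [Fintype ι] [DecidableEq ι] [Fintype κ]
    [DecidableEq κ] [Semiring R] (U : Matrix ι κ R) (V : Matrix κ ι R) (j : ℕ) :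
    (U * V) ^ (j + 1) = U * (V * U) ^ j * V := by
  induction j with
  | zero => simp
  | succ j ih => simp only [pow_succ _ (j + 1), ih, pow_succ _ j, Matrix.mul_assoc]

namespace IsDrazinInverse

variable {ι : Type*} [Fintype ι] [DecidableEq ι] {A X : Matrix ι ι ℂ}

theorem commute (h : IsDrazinInverse A X) : Commute A X := h.1

theorem mul_sq (h : IsDrazinInverse A X) : A * X ^ 2 = X := by
  rw [sq, ← Matrix.mul_assoc, h.1, h.2.1]

theorem sq_mul (h : IsDrazinInverse A X) : X ^ 2 * A = X := by
  rw [sq, Matrix.mul_assoc, ← h.1, ← Matrix.mul_assoc, h.2.1]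

theorem mul_eq_self_of_mul_eq_self {E : Matrix ι ι ℂ} (h : IsDrazinInverse A X)
    (hE : E * A = A) : E * X = X := by
  rw [← h.mul_sq, ← Matrix.mul_assoc, hE]

theorem mul_one_sub_mul_eq_zero (h : IsDrazinInverse A X) : X * (1 - A * X) = 0 := by
  rw [mul_sub, mul_one, ← Matrix.mul_assoc, h.2.1, sub_self]

theorem one_sub_mul_mul_eq_zero (h : IsDrazinInverse A X) : (1 - A * X) * X = 0 := by
  rw [sub_mul, one_mul, h.1, h.2.1, sub_self]

theorem commute_one_sub_mul (h : IsDrazinInverse A X) : Commute A (1 - A * X) :=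
  (Commute.one_right A).sub_right ((Commute.refl A).mul_right h.commute)

theorem isIdempotentElem_one_sub_mul (h : IsDrazinInverse A X) :
    IsIdempotentElem (1 - A * X) := by
  refine IsIdempotentElem.one_sub ?_
  rw [IsIdempotentElem, Matrix.mul_assoc, ← Matrix.mul_assoc X, h.2.1]

theorem isNilpotent_mul_one_sub_mul (h : IsDrazinInverse A X) :
    IsNilpotent (A * (1 - A * X)) := by
  obtain ⟨k, hk⟩ := h.2.2
  refine ⟨k + 1, ?_⟩
  rw [h.commute_one_sub_mul.mul_pow, h.isIdempotentElem_one_sub_mul.pow_succ_eq, mul_sub,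
    mul_one, h.1, ← Matrix.mul_assoc, hk, ← pow_succ, sub_self]

theorem add_of_mul_eq_zero {N : Matrix ι ι ℂ} (h : IsDrazinInverse A X) (hAN : A * N = 0)
    (hNA : N * A = 0) (hN : IsNilpotent N) : IsDrazinInverse (A + N) X := by
  have hXN : X * N = 0 := by rw [← h.sq_mul, Matrix.mul_assoc, hAN, Matrix.mul_zero]
  have hNX : N * X = 0 := by rw [← h.mul_sq, ← Matrix.mul_assoc, hNA, Matrix.zero_mul]
  have hpow : ∀ j : ℕ, (A + N) ^ (j + 1) = A ^ (j + 1) + N ^ (j + 1) := by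
    intro j
    induction j with
    | zero => simp
    | succ j ih =>
      have hAjN : A ^ (j + 1) * N = 0 := by
        rw [pow_succ, Matrix.mul_assoc, hAN, Matrix.mul_zero]
      have hNjA : N ^ (j + 1) * A = 0 := by
        rw [pow_succ, Matrix.mul_assoc, hNA, Matrix.mul_zero]
      rw [pow_succ, ih, add_mul, mul_add, mul_add, hAjN, hNjA, add_zero, zero_add, ← pow_succ,
        ← pow_succ]
  obtain ⟨k, hk⟩ := h.2.2
  obtain ⟨l, hl⟩ := hN
  refine ⟨by rw [add_mul, mul_add, hXN, hNX, h.1], by rw [mul_add, hXN, add_zero, h.2.1],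
    k + l + 1, ?_⟩
  rw [hpow, hpow, pow_eq_zero_of_le (by omega) hl, pow_eq_zero_of_le (by omega) hl, add_zero,
    add_zero, pow_succ_mul_eq_pow_of_le hk (by omega)]

theorem cline {κ : Type*} [Fintype κ] [DecidableEq κ] {U : Matrix ι κ ℂ} {V : Matrix κ ι ℂ}
    {Y : Matrix κ κ ℂ} (h : IsDrazinInverse (V * U) Y) : IsDrazinInverse (U * V) (U * Y ^ 2 * V) := by
  obtain ⟨k, hk⟩ := h.2.2
  have hl : U * V * (U * Y ^ 2 * V) = U * Y * V := by
    calc U * V * (U * Y ^ 2 * V) = U * (V * U * Y ^ 2) * V := by simp only [Matrix.mul_assoc]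
      _ = U * Y * V := by rw [h.mul_sq]
  have hr : U * Y ^ 2 * V * (U * V) = U * Y * V := by
    calc U * Y ^ 2 * V * (U * V) = U * (Y ^ 2 * (V * U)) * V := by simp only [Matrix.mul_assoc]
      _ = U * Y * V := by rw [h.sq_mul]
  refine ⟨hl.trans hr.symm, ?_, k + 1, ?_⟩
  · calc U * Y ^ 2 * V * (U * V) * (U * Y ^ 2 * V) = U * Y * V * (U * Y ^ 2 * V) := by rw [hr]
      _ = U * (Y * (V * U * Y ^ 2)) * V := by simp only [Matrix.mul_assoc]
      _ = U * Y ^ 2 * V := by rw [h.mul_sq, ← sq]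
  · calc (U * V) ^ (k + 1 + 1) * (U * Y ^ 2 * V)
          = U * ((V * U) ^ (k + 1) * (V * U * Y ^ 2)) * V := by
            rw [Matrix.mul_pow_succ]; simp only [Matrix.mul_assoc]
      _ = U * (V * U) ^ k * V := by rw [h.mul_sq, hk]
      _ = (U * V) ^ (k + 1) := (Matrix.mul_pow_succ U V k).symm

theorem add_mul_one_sub_mul {F Y : Matrix ι ι ℂ} (hF : IsDrazinInverse F Y)
    (h : IsDrazinInverse A X) (hl : (1 - A * X) * F = 0) (hr : F * (1 - A * X) = 0) :
    IsDrazinInverse (F + A * (1 - A * X)) Y := by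
  refine hF.add_of_mul_eq_zero ?_ ?_ h.isNilpotent_mul_one_sub_mul
  · rw [h.commute_one_sub_mul.eq, ← Matrix.mul_assoc, hr, Matrix.zero_mul]
  · rw [Matrix.mul_assoc, hl, Matrix.mul_zero]

variable (K : Matrix ι ι ℂ)

theorem one_sub_mul_mul_mul_add_eq_zero (h : IsDrazinInverse A X) :
    (1 - A * X) * (A * (A * X + X * K * X)) = 0 := by
  have hA : ∀ T, (1 - A * X) * (A * T) = A * ((1 - A * X) * T) := fun T => by
    rw [← Matrix.mul_assoc, ← h.commute_one_sub_mul.eq, Matrix.mul_assoc]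
  have hX : ∀ T, (1 - A * X) * (X * T) = 0 := fun T => by
    rw [← Matrix.mul_assoc, h.one_sub_mul_mul_eq_zero, Matrix.zero_mul]
  simp only [mul_add, Matrix.mul_assoc, hA, hX, h.one_sub_mul_mul_eq_zero, Matrix.mul_zero,
    add_zero]

theorem mul_add_mul_one_sub_eq_zero (h : IsDrazinInverse A X) :
    A * (A * X + X * K * X) * (1 - A * X) = 0 := by
  simp only [add_mul, mul_add, Matrix.mul_assoc, h.mul_one_sub_mul_eq_zero, Matrix.mul_zero,
    add_zero]

theorem one_add_mul_mul_mul_comm (h : IsDrazinInverse A X) :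
    (1 + X * K * X) * (A * X) = X * (A * (1 + X * K * X)) := by
  have hXAX : X * (A * X) = X := by rw [← Matrix.mul_assoc, h.2.1]
  have hXAXT : ∀ T, X * (A * (X * T)) = X * T := fun T => by
    rw [← Matrix.mul_assoc, ← Matrix.mul_assoc, h.2.1]
  simp only [add_mul, mul_add, one_mul, mul_one, Matrix.mul_assoc, hXAX, hXAXT]
  rw [h.commute.eq]

theorem fromRows_mul_sq {κ : Type*} {A Ad G : Matrix ι ι ℂ} (C : Matrix κ ι ℂ)
    (hX : IsDrazinInverse (A * G) X) (hAX : A * Ad * X = X)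
    (hG : G * (A * Ad) = Ad * (A * G)) :
    fromRows A C * (G * X ^ 2 * A) ^ 2 = fromRows 1 (C * Ad) * (X ^ 2 * A) := by
  have hAGX : A * G * X ^ 3 = X ^ 2 := by
    rw [pow_succ, ← Matrix.mul_assoc, hX.mul_sq, ← sq]
  have hGX : G * X ^ 3 = Ad * X ^ 2 := by
    calc G * X ^ 3 = G * (A * Ad) * X ^ 3 := by
          rw [Matrix.mul_assoc, pow_succ', ← Matrix.mul_assoc (A * Ad), hAX]
      _ = Ad * X ^ 2 := by rw [hG, Matrix.mul_assoc, hAGX]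
  have hsq : (G * X ^ 2 * A) ^ 2 = G * X ^ 3 * A := by
    calc (G * X ^ 2 * A) ^ 2 = G * (X ^ 2 * (A * G) * X ^ 2) * A := by
          simp only [sq, Matrix.mul_assoc]
      _ = G * X ^ 3 * A := by rw [hX.sq_mul, ← pow_succ', Matrix.mul_assoc]
  rw [hsq, fromRows_mul, fromRows_mul, Matrix.one_mul, Matrix.mul_assoc C Ad,
    ← Matrix.mul_assoc Ad, ← hGX, ← Matrix.mul_assoc A, ← Matrix.mul_assoc A, hAGX]

end IsDrazinInverse

theorem stmt_15 {m n : ℕ}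
    (A Ad : Matrix (Fin m) (Fin m) ℂ) (B : Matrix (Fin m) (Fin n) ℂ)
    (C : Matrix (Fin n) (Fin m) ℂ) (D : Matrix (Fin n) (Fin n) ℂ)
    (hAd : IsDrazinInverse A Ad)
    (hZ : D - C * Ad * B = 0) (hAB : (1 - A * Ad) * B = 0)
    (hBCA : B * C * (1 - A * Ad) = 0)
    (AWd : Matrix (Fin m) (Fin m) ℂ)
    (hAWd : IsDrazinInverse (A * (A * Ad + Ad * B * C * Ad)) AWd) :
    IsDrazinInverse (Matrix.fromBlocks A B C D)
      (Matrix.fromRows (1 : Matrix (Fin m) (Fin m) ℂ) (C * Ad) *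
        (AWd ^ 2 * A) *
        Matrix.fromCols (1 : Matrix (Fin m) (Fin m) ℂ) (Ad * B)) := by
  rw [Matrix.mul_assoc Ad B C] at hAWd
  rw [sub_eq_zero] at hZ
  rw [Matrix.sub_mul, Matrix.one_mul, sub_eq_zero] at hAB
  rw [Matrix.mul_sub, Matrix.mul_one, sub_eq_zero] at hBCA
  set G : Matrix (Fin m) (Fin m) ℂ := 1 + Ad * (B * C) * Ad with hG
  set P := fromRows A C
  set Q := fromCols (1 : Matrix (Fin m) (Fin m) ℂ) (Ad * B)
  have hPQ : P * Q = fromBlocks A B C D := by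
    rw [fromRows_mul_fromCols, Matrix.mul_one, Matrix.mul_one, ← Matrix.mul_assoc,
      ← Matrix.mul_assoc, ← hAB, ← hZ]
  have hQP : Q * P = G * A := by
    rw [fromCols_mul_fromRows, hG, add_mul, Matrix.one_mul, Matrix.mul_assoc _ Ad,
      ← hAd.commute.eq, Matrix.mul_assoc Ad (B * C), ← hBCA, Matrix.mul_assoc]
  have hAG : A * G = A * (A * Ad + Ad * (B * C) * Ad) + A * (1 - A * Ad) := by
    rw [hG]; noncomm_ring
  have hX : IsDrazinInverse (A * G) AWd := hAG ▸
    hAWd.add_mul_one_sub_mul hAd (hAd.one_sub_mul_mul_mul_add_eq_zero _)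
      (hAd.mul_add_mul_one_sub_eq_zero _)
  have hAX : A * Ad * AWd = AWd := by
    refine hAWd.mul_eq_self_of_mul_eq_self ?_
    have := hAd.one_sub_mul_mul_mul_add_eq_zero (B * C)
    rwa [sub_mul, one_mul, sub_eq_zero, eq_comm] at this
  have hGA : IsDrazinInverse (Q * P) (G * AWd ^ 2 * A) := hQP ▸ hX.cline
  have hM := hGA.cline
  rwa [hPQ, hX.fromRows_mul_sq C hAX (hAd.one_add_mul_mul_mul_comm _)] at hM
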